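/- arXiv:2605.10706 — 2 statements merged into one kernel-verified Lean document; each statement's English description precedes it below -/
import Mathlib

section
/- Let φ : ℝ^{d_QK} → ℝ^m be any map, and let Q, K ∈ ℝ^{L×d_QK}, V ∈ ℝ^{L×d} with rows q_i, k_i, v_i. Let à ∈ ℝ^{L×L} have entries Ã_{ij} = φ(q_i)ᵀφ(k_j), and let M ∈ ℝ^{L×L} be any mask. Then for each i, the i-th row of (à ⊙ M) V equals φ(q_i)ᵀ D_i, where D_i = Σ_{j=1}^{L} M_{ij} φ(k_j) v_jᵀ ∈ ℝ^{m×d}, and the i-th row-sum of à ⊙ M equals φ(q_i)ᵀ (Σ_j M_{ij} φ(k_j)). Consequently the masked normalized attention output ((à ⊙ M)V)_i / ((à ⊙ M) 1_L)_i can be computed without materializing Ã. -/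
open Matrix
open scoped Matrix

/-- Correctness identity underlying efficient low-rank masked attention: for the factored
attention `Ã_{ij} = φ(q_i)ᵀφ(k_j)` and any mask `M`, the `i`-th row of `(Ã ⊙ M) V` equals
`φ(q_i)ᵀ D_i` with `D_i = Σ_j M_{ij} φ(k_j) v_jᵀ ∈ ℝ^{m×d}`, and the `i`-th row-sum of
`Ã ⊙ M` equals `φ(q_i)ᵀ (Σ_j M_{ij} φ(k_j))`; consequently the masked normalized attention
output can be computed without materializing `Ã`. -/
theorem masked_lowrank_attention_rows {L dQK d m : ℕ}
    (φ : (Fin dQK → ℝ) → (Fin m → ℝ))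
    (q k : Fin L → (Fin dQK → ℝ)) (v : Fin L → (Fin d → ℝ))
    (M : Matrix (Fin L) (Fin L) ℝ)
    (Atil : Matrix (Fin L) (Fin L) ℝ)
    (hA : ∀ i j, Atil i j = φ (q i) ⬝ᵥ φ (k j))
    (V : Matrix (Fin L) (Fin d) ℝ) (hV : ∀ j c, V j c = v j c)
    (D : Fin L → Matrix (Fin m) (Fin d) ℝ)
    (hD : ∀ i, D i = ∑ j, M i j • vecMulVec (φ (k j)) (v j)) :
    (∀ i c, ((Matrix.hadamard Atil M) * V) i c = (φ (q i)) ⬝ᵥ (fun t => D i t c)) ∧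
    (∀ i, ∑ j, (Matrix.hadamard Atil M) i j
        = (φ (q i)) ⬝ᵥ (∑ j, M i j • φ (k j))) ∧
    (∀ i c, (((Matrix.hadamard Atil M) * V) i c) / (∑ j, (Matrix.hadamard Atil M) i j)
        = ((φ (q i)) ⬝ᵥ (fun t => D i t c)) / ((φ (q i)) ⬝ᵥ (∑ j, M i j • φ (k j)))) := by
  have h1 : ∀ i c, ((Matrix.hadamard Atil M) * V) i c = (φ (q i)) ⬝ᵥ (fun t => D i t c) := by
    intro i c
    simp only [Matrix.mul_apply, Matrix.hadamard_apply, hA, hV, hD, dotProduct,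
      Matrix.sum_apply, Matrix.smul_apply, Matrix.vecMulVec_apply, smul_eq_mul,
      Finset.mul_sum, Finset.sum_mul]
    rw [Finset.sum_comm]
    congr 1; ext j; congr 1; ext t; ring
  have h2 : ∀ i, ∑ j, (Matrix.hadamard Atil M) i j
      = (φ (q i)) ⬝ᵥ (∑ j, M i j • φ (k j)) := by
    intro i
    simp only [Matrix.hadamard_apply, hA, dotProduct, Finset.sum_apply, Pi.smul_apply,
      smul_eq_mul, Finset.mul_sum, Finset.sum_mul]
    rw [Finset.sum_comm]
    congr 1; ext j; congr 1; ext t; ring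
  exact ⟨h1, h2, fun i c => by rw [h1, h2]⟩
end

section
/- Let M ∈ ℝ^{L×L}, φ : ℝ^{d_QK} → ℝ^m, and define V¹ ∈ ℝ^{L×md} with rows V¹_{i:} = vec(φ(k_i) v_iᵀ) and V² ∈ ℝ^{L×m} with rows φ(k_i)ᵀ. Let D̃¹ = M V¹ and D̃² = M V². Then for each i, φ(q_i)ᵀ · devec(D̃¹_{i:}) = Σ_j M_{ij} (φ(q_i)ᵀφ(k_j)) v_jᵀ and φ(q_i)ᵀ (D̃²_{i:})ᵀ = Σ_j M_{ij} φ(q_i)ᵀφ(k_j), so the output p_i of Algorithm 2 equals the i-th row of the exactly-masked normalized attention D̂^{-1}(Ã ⊙ M)V. -/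
open Matrix

/-- Correctness of Algorithm 2 (General Efficient Low-Rank Masked Attention): with
`V¹_{i,(t,c)} = φ(k_i)_t v_{i,c}` (vectorized outer products), `V²_{i,t} = φ(k_i)_t`,
`D̃¹ = M V¹`, `D̃² = M V²`, we have
`φ(q_i)ᵀ devec(D̃¹_{i:}) = Σ_j M_{ij} (φ(q_i)ᵀφ(k_j)) v_jᵀ` and
`φ(q_i)ᵀ (D̃²_{i:})ᵀ = Σ_j M_{ij} φ(q_i)ᵀφ(k_j)`, so the algorithm output `p_i`
equals the `i`-th row of the exactly-masked normalized attention `D̂⁻¹ (Ã ⊙ M) V`. -/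
theorem algorithm2_correctness {L dQK d m : ℕ}
    (φ : (Fin dQK → ℝ) → (Fin m → ℝ))
    (q k : Fin L → (Fin dQK → ℝ)) (v : Fin L → (Fin d → ℝ))
    (M : Matrix (Fin L) (Fin L) ℝ)
    (V1 : Matrix (Fin L) (Fin m × Fin d) ℝ)
    (hV1 : ∀ i tc, V1 i tc = φ (k i) tc.1 * v i tc.2)
    (V2 : Matrix (Fin L) (Fin m) ℝ) (hV2 : ∀ i t, V2 i t = φ (k i) t)
    (D1 : Matrix (Fin L) (Fin m × Fin d) ℝ) (hD1 : D1 = M * V1)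
    (D2 : Matrix (Fin L) (Fin m) ℝ) (hD2 : D2 = M * V2)
    (Atil : Matrix (Fin L) (Fin L) ℝ)
    (hA : ∀ i j, Atil i j = φ (q i) ⬝ᵥ φ (k j))
    (V : Matrix (Fin L) (Fin d) ℝ) (hV : ∀ j c, V j c = v j c)
    (p : Fin L → Fin d → ℝ)
    (hp : ∀ i c, p i c = (∑ t, φ (q i) t * D1 i (t, c)) / (∑ t, φ (q i) t * D2 i t)) :
    (∀ i c, (∑ t, φ (q i) t * D1 i (t, c))
        = ∑ j, M i j * (φ (q i) ⬝ᵥ φ (k j)) * v j c) ∧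
    (∀ i, (∑ t, φ (q i) t * D2 i t) = ∑ j, M i j * (φ (q i) ⬝ᵥ φ (k j))) ∧
    (∀ i c, p i c
        = ((Matrix.hadamard Atil M) * V) i c / (∑ j, (Matrix.hadamard Atil M) i j)) := by
  have h1 : ∀ i c, (∑ t, φ (q i) t * D1 i (t, c))
      = ∑ j, M i j * (φ (q i) ⬝ᵥ φ (k j)) * v j c := by
    intro i c
    subst hD1
    simp only [Matrix.mul_apply, hV1, Finset.mul_sum, dotProduct, Finset.sum_mul]
    rw [Finset.sum_comm]
    apply Finset.sum_congr rfl; intro j _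
    apply Finset.sum_congr rfl; intro t _
    ring
  have h2 : ∀ i, (∑ t, φ (q i) t * D2 i t) = ∑ j, M i j * (φ (q i) ⬝ᵥ φ (k j)) := by
    intro i
    subst hD2
    simp only [Matrix.mul_apply, hV2, Finset.mul_sum, dotProduct, Finset.sum_mul]
    rw [Finset.sum_comm]
    apply Finset.sum_congr rfl; intro j _
    apply Finset.sum_congr rfl; intro t _
    ring
  refine ⟨h1, h2, fun i c => ?_⟩
  rw [hp, h1, h2]
  congr 1
  · simp only [Matrix.mul_apply, Matrix.hadamard_apply, hA, hV]
    apply Finset.sum_congr rfl; intro j _; ring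
  · simp only [Matrix.hadamard_apply, hA]
    apply Finset.sum_congr rfl; intro j _; ring
end
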